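/- Let p be an integer-valued supermodular set-function on the subsets of a nonempty finite set S with p(∅) = 0, assume Ḃ(p) is nonempty, and set r₁ := p(S₁) − (β₁ − 1)·|S₁|. Then: (i) an r₁-element subset L of S₁ satisfies |L ∩ X| ≥ p₁(X) − (β₁ − 1)·|X| for every X ⊆ S₁ if and only if L = {s ∈ S₁ : m₁(s) = β₁} for some decreasingly minimal element m₁ of Ḃ(p₁); (ii) the family ℬ₁ of all such subsets L is nonempty and forms the family of bases of a matroid on ground set S₁. -/

import Mathlib

/-!
Put `h₁(X) = p(X) - (β₁ - 1)|X|`. It is supermodular, so its maximizers are closed under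
intersection and the peak set `S₁` is itself a maximizer. For `q = p₁` this gives
`q(X) - (β₁ - 1)|X| ≤ r₁` for all `X ⊆ S₁`, while an element of `Ḃ(p)` bounded by `β₁`
gives `q(X) ≤ β₁|X|`. Under these two bounds, a minimizer of `∑ m(s)²` over `Ḃ(q)` takes
only the values `β₁ - 1` and `β₁`: otherwise the minimal tight set through a value above `β₁`,
or the maximal tight set avoiding a value below `β₁ - 1`, yields a unit transfer that
decreases `∑ m(s)²`. The vectors of `Ḃ(q)` with values in `{β₁ - 1, β₁}` are exactly
`(β₁ - 1) + χ_L` for `L ∈ ℬ₁`, and each of them is dec-min: any other element of `Ḃ(q)`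
either exceeds `β₁` somewhere or, its sum being fixed, takes the value `β₁` more than `r₁`
times. Finally, the exchange property of `Ḃ(q)` restricted to these vectors is the basis
exchange axiom for `ℬ₁`.
-/

open Finset

variable {α : Type*}

/-- Integer-valued supermodular set-function. -/
def Supermodular [DecidableEq α] (p : Finset α → ℤ) : Prop :=
  ∀ X Y : Finset α, p X + p Y ≤ p (X ∩ Y) + p (X ∪ Y)

/-- The M-convex set `Ḃ(p)` of integral elements of the base-polyhedron `B'(p)`:
all `m : α → ℤ` with `m̃(X) ≥ p(X)` for every `X` and `m̃(S) = p(S)`. -/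
def Bdot [Fintype α] (p : Finset α → ℤ) : Set (α → ℤ) :=
  {m | (∀ X : Finset α, p X ≤ ∑ s ∈ X, m s) ∧ (∑ s, m s) = p Finset.univ}

/-- `x↓`: the values of `x` arranged in nonincreasing order. -/
def sortedDesc [Fintype α] (x : α → ℤ) : List ℤ :=
  ((Finset.univ.val.map x).sort (· ≤ ·)).reverse

/-- `x↑`: the values of `x` arranged in nondecreasing order. -/
def sortedAsc [Fintype α] (x : α → ℤ) : List ℤ :=
  (Finset.univ.val.map x).sort (· ≤ ·)

/-- `x ≤_dec y`: `x↓` is lexicographically less than or equal to `y↓`. -/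
def DecLE [Fintype α] (x y : α → ℤ) : Prop :=
  sortedDesc x = sortedDesc y ∨ List.Lex (· < ·) (sortedDesc x) (sortedDesc y)

/-- `x ≤_inc y`: `x↑` is lexicographically less than or equal to `y↑`. -/
def IncLE [Fintype α] (x y : α → ℤ) : Prop :=
  sortedAsc x = sortedAsc y ∨ List.Lex (· < ·) (sortedAsc x) (sortedAsc y)

/-- `m` is a decreasingly minimal element of `Bdot p`. -/
def DecMin [Fintype α] (p : Finset α → ℤ) (m : α → ℤ) : Prop :=
  m ∈ Bdot p ∧ ∀ y ∈ Bdot p, DecLE m y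

section Supermodular

variable [DecidableEq α]

theorem Supermodular.sub_mul_card {p : Finset α → ℤ} (hp : Supermodular p) (c : ℤ) :
    Supermodular fun X => p X - c * X.card := by
  intro X Y
  have hcard : ((X ∩ Y).card : ℤ) + (X ∪ Y).card = X.card + Y.card := by
    exact_mod_cast card_inter_add_card_union X Y
  linear_combination hp X Y + c * hcard

theorem Supermodular.map_embedding {β : Type*} [DecidableEq β] {p : Finset β → ℤ}
    (hp : Supermodular p) (e : α ↪ β) : Supermodular fun X : Finset α => p (X.map e) := by
  intro X Y
  simpa only [map_inter, map_union] using hp (X.map e) (Y.map e)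

theorem Supermodular.forall_le_inter {f : Finset α → ℤ} (hf : Supermodular f) {X Y : Finset α}
    (hX : ∀ Z, f Z ≤ f X) (hY : ∀ Z, f Z ≤ f Y) : ∀ Z, f Z ≤ f (X ∩ Y) := by
  intro Z
  linarith [hf X Y, hX (X ∪ Y), hY Z]

variable [Fintype α]

theorem exists_least_of_inter_closed {P : Finset α → Prop}
    (hP : ∀ X Y, P X → P Y → P (X ∩ Y)) {X₀ : Finset α} (h₀ : P X₀) :
    ∃ D, P D ∧ ∀ X, P X → D ⊆ X := by
  classical
  have hF : (univ.filter P).Nonempty := ⟨X₀, by simpa using h₀⟩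
  exact ⟨(univ.filter P).inf' hF id,
    inf'_induction hF id (fun X hX Y hY => hP X Y hX hY) fun X hX => (mem_filter.1 hX).2,
    fun X hX => inf'_le id (by simpa using hX)⟩

theorem exists_greatest_of_union_closed {P : Finset α → Prop}
    (hP : ∀ X Y, P X → P Y → P (X ∪ Y)) {X₀ : Finset α} (h₀ : P X₀) :
    ∃ U, P U ∧ ∀ X, P X → X ⊆ U := by
  classical
  have hF : (univ.filter P).Nonempty := ⟨X₀, by simpa using h₀⟩
  exact ⟨(univ.filter P).sup' hF id,
    sup'_induction hF id (fun X hX Y hY => hP X Y hX hY) fun X hX => (mem_filter.1 hX).2,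
    fun X hX => le_sup' id (by simpa using hX)⟩

theorem Supermodular.forall_le_of_mem_iff {f : Finset α → ℤ} (hf : Supermodular f)
    {S : Finset α} (hS : ∀ s, s ∈ S ↔ ∀ X, (∀ Y, f Y ≤ f X) → s ∈ X) : ∀ Y, f Y ≤ f S := by
  obtain ⟨X₀, -, hX₀⟩ := (univ : Finset (Finset α)).exists_max_image f univ_nonempty
  obtain ⟨D, hD, hDmin⟩ := exists_least_of_inter_closed (P := fun X => ∀ Y, f Y ≤ f X)
    (fun _ _ => hf.forall_le_inter) fun Y => hX₀ Y (mem_univ Y)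
  have hSD : S = D := by
    ext s
    rw [hS]
    exact ⟨fun h => h D hD, fun hs X hX => hDmin X hX hs⟩
  exact hSD ▸ hD

end Supermodular

section Bdot

variable [Fintype α] {q : Finset α → ℤ} {m m' : α → ℤ}

theorem le_mul_card_of_mem_bdot {β : ℤ} (hm : m ∈ Bdot q) (hβ : ∀ s, m s ≤ β)
    (X : Finset α) : q X ≤ β * X.card :=
  calc q X ≤ ∑ s ∈ X, m s := hm.1 X
    _ ≤ X.card • β := sum_le_card_nsmul X m β fun s _ => hβ s
    _ = β * X.card := by rw [nsmul_eq_mul, mul_comm]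

variable [DecidableEq α]

theorem bdot_nonempty (hq : Supermodular q) (hq0 : q ∅ = 0) : (Bdot q).Nonempty := by
  suffices ∀ Z : Finset α, ∃ m : α → ℤ, (∀ X ⊆ Z, q X ≤ ∑ s ∈ X, m s) ∧ ∑ s ∈ Z, m s = q Z by
    obtain ⟨m, hm, hsum⟩ := this univ
    exact ⟨m, fun X => hm X (subset_univ X), hsum⟩
  intro Z
  induction Z using Finset.induction_on with
  | empty => exact ⟨0, fun X hX => by simp [subset_empty.1 hX, hq0], by simp [hq0]⟩
  | insert a Z ha ih =>
    obtain ⟨m, hm, hsum⟩ := ih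
    refine ⟨Function.update m a (q (insert a Z) - q Z), fun X hX => ?_, ?_⟩
    · by_cases haX : a ∈ X
      · have hinter : X ∩ Z = X \ {a} := by
          ext s; have := @hX s; aesop
        have hunion : X ∪ Z = insert a Z := by
          ext s; have := @hX s; aesop
        have hsub : X \ {a} ⊆ Z := hinter ▸ inter_subset_right
        have := hq X Z
        rw [hinter, hunion] at this
        rw [sum_update_of_mem haX]
        linarith [hm _ hsub]
      · have hXZ : X ⊆ Z := fun s hs =>
          (mem_insert.1 (hX hs)).resolve_left (by rintro rfl; exact haX hs)
        rw [sum_update_of_notMem haX]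
        exact hm X hXZ
    · rw [sum_insert ha, Function.update_self, sum_update_of_notMem ha, hsum]
      ring

end Bdot

section Tight

variable [Fintype α] [DecidableEq α] {q : Finset α → ℤ} {m m' : α → ℤ}

def IsTight (q : Finset α → ℤ) (m : α → ℤ) (X : Finset α) : Prop :=
  ∑ s ∈ X, m s = q X

theorem IsTight.inter_and_union (hq : Supermodular q) (hm : m ∈ Bdot q) {X Y : Finset α}
    (hX : IsTight q m X) (hY : IsTight q m Y) :
    IsTight q m (X ∩ Y) ∧ IsTight q m (X ∪ Y) := by
  unfold IsTight at *
  have := sum_union_inter (s₁ := X) (s₂ := Y) (f := m)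
  constructor <;> linarith [hq X Y, hm.1 (X ∩ Y), hm.1 (X ∪ Y)]

theorem exists_least_isTight_mem (hq : Supermodular q) (hm : m ∈ Bdot q) (s : α) :
    ∃ D, (IsTight q m D ∧ s ∈ D) ∧ ∀ X, IsTight q m X ∧ s ∈ X → D ⊆ X :=
  exists_least_of_inter_closed
    (fun _ _ hX hY => ⟨(hX.1.inter_and_union hq hm hY.1).1, mem_inter.2 ⟨hX.2, hY.2⟩⟩)
    (X₀ := univ) ⟨hm.2, mem_univ s⟩

theorem exists_greatest_isTight_not_mem (hq : Supermodular q) (hq0 : q ∅ = 0)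
    (hm : m ∈ Bdot q) (t : α) :
    ∃ U, (IsTight q m U ∧ t ∉ U) ∧ ∀ X, IsTight q m X ∧ t ∉ X → X ⊆ U :=
  exists_greatest_of_union_closed
    (fun _ _ hX hY => ⟨(hX.1.inter_and_union hq hm hY.1).2, by simp [hX.2, hY.2]⟩)
    (X₀ := ∅) ⟨by simp [IsTight, hq0], notMem_empty t⟩

theorem add_single_sub_single_mem_bdot (hm : m ∈ Bdot q) {s t : α}
    (h : ∀ X, IsTight q m X → s ∈ X → t ∈ X) :
    m + Pi.single t 1 - Pi.single s 1 ∈ Bdot q := by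
  have hsum : ∀ X : Finset α, ∑ v ∈ X, (m + Pi.single t 1 - Pi.single s 1 : α → ℤ) v
      = ∑ v ∈ X, m v + (if t ∈ X then 1 else 0) - (if s ∈ X then 1 else 0) := by
    intro X
    simp only [Pi.add_apply, Pi.sub_apply, sum_sub_distrib, sum_add_distrib, sum_pi_single']
  refine ⟨fun X => ?_, ?_⟩
  · rw [hsum]
    have hX := hm.1 X
    by_cases hs : s ∈ X
    · by_cases ht : t ∈ X
      · simp [hs, ht, hX]
      · have : ¬ IsTight q m X := fun hT => ht (h X hT hs)
        simp only [IsTight] at this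
        simp only [hs, ht, if_true, if_false]
        omega
    · split_ifs <;> omega
  · rw [hsum univ]
    simp [hm.2]

theorem exists_add_single_sub_single_mem_bdot (hq : Supermodular q) (hm : m ∈ Bdot q)
    (hm' : m' ∈ Bdot q) {s : α} (hs : m' s < m s) :
    ∃ t, m t < m' t ∧ m + Pi.single t 1 - Pi.single s 1 ∈ Bdot q := by
  obtain ⟨D, ⟨hD, hsD⟩, hDmin⟩ := exists_least_isTight_mem hq hm s
  obtain ⟨t, htD, ht⟩ : ∃ t ∈ D, m t < m' t := by
    by_contra! hle
    have := sum_lt_sum hle ⟨s, hsD, hs⟩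
    linarith [hm'.1 D, hD.symm]
  exact ⟨t, ht, add_single_sub_single_mem_bdot hm fun X hX hsX => hDmin X ⟨hX, hsX⟩ htD⟩

end Tight

section Box

variable [Fintype α] [DecidableEq α] {q : Finset α → ℤ} {m : α → ℤ} {γ r : ℤ}

theorem exists_add_single_sub_single_mem_bdot_of_gt (hq : Supermodular q)
    (hle : ∀ X, q X ≤ γ * X.card) (hm : m ∈ Bdot q) {s : α} (hs : γ < m s) :
    ∃ t, m t + 2 ≤ m s ∧ m + Pi.single t 1 - Pi.single s 1 ∈ Bdot q := by
  obtain ⟨D, ⟨hD, hsD⟩, hDmin⟩ := exists_least_isTight_mem hq hm s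
  obtain ⟨t, htD, ht⟩ : ∃ t ∈ D, m t + 2 ≤ m s := by
    by_contra! hgap
    have := sum_lt_sum (f := fun _ => γ) (fun t ht => by linarith [hgap t ht]) ⟨s, hsD, hs⟩
    simp only [sum_const, nsmul_eq_mul] at this
    linarith [hle D, hD.symm]
  exact ⟨t, ht, add_single_sub_single_mem_bdot hm fun X hX hsX => hDmin X ⟨hX, hsX⟩ htD⟩

theorem exists_add_single_sub_single_mem_bdot_of_lt (hq : Supermodular q) (hq0 : q ∅ = 0)
    (hr : q univ - (γ - 1) * Fintype.card α = r) (hmax : ∀ X, q X - (γ - 1) * X.card ≤ r)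
    (hm : m ∈ Bdot q) {t : α} (ht : m t < γ - 1) :
    ∃ s, m t + 2 ≤ m s ∧ m + Pi.single t 1 - Pi.single s 1 ∈ Bdot q := by
  obtain ⟨U, ⟨hU, htU⟩, hUmax⟩ := exists_greatest_isTight_not_mem hq hq0 hm t
  obtain ⟨s, hsU, hs⟩ : ∃ s ∉ U, m t + 2 ≤ m s := by
    by_contra! hgap
    have hlt := sum_lt_sum (s := Uᶜ) (g := fun _ => γ - 1)
      (fun v hv => by
        rcases eq_or_ne v t with rfl | hvt
        · exact ht.le
        · linarith [hgap v (mem_compl.1 hv)])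
      ⟨t, mem_compl.2 htU, ht⟩
    have hcard : (U.card : ℤ) + Uᶜ.card = Fintype.card α := by
      exact_mod_cast card_add_card_compl U
    have hmul : (γ - 1) * (U.card : ℤ) + (γ - 1) * Uᶜ.card = (γ - 1) * Fintype.card α := by
      rw [← hcard]; ring
    simp only [sum_const, nsmul_eq_mul] at hlt
    linarith [sum_add_sum_compl U m, hm.2, hU.symm, hmax U]
  refine ⟨s, hs, add_single_sub_single_mem_bdot hm fun X hX hsX => ?_⟩
  by_contra htX
  exact hsU (hUmax X ⟨hX, htX⟩ hsX)

theorem sum_sq_add_single_sub_single_add_two_le {s t : α} (hst : m t + 2 ≤ m s) :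
    ∑ v, (m + Pi.single t 1 - Pi.single s 1 : α → ℤ) v ^ 2 + 2 ≤ ∑ v, m v ^ 2 := by
  have hts : t ≠ s := by rintro rfl; omega
  have hdiff := Fintype.sum_eq_add s t hts.symm
    (f := fun v => (m + Pi.single t 1 - Pi.single s 1 : α → ℤ) v ^ 2 - m v ^ 2)
    fun v hv => by simp [hv.1, hv.2]
  simp only [sum_sub_distrib, Pi.add_apply, Pi.sub_apply, Pi.single_eq_same,
    Pi.single_eq_of_ne hts, Pi.single_eq_of_ne hts.symm] at hdiff ⊢
  nlinarith

theorem exists_mem_bdot_forall_mem_Icc (hq : Supermodular q) (hq0 : q ∅ = 0)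
    (hle : ∀ X, q X ≤ γ * X.card) (hr : q univ - (γ - 1) * Fintype.card α = r)
    (hmax : ∀ X, q X - (γ - 1) * X.card ≤ r) :
    ∃ m ∈ Bdot q, ∀ s, m s ∈ Set.Icc (γ - 1) γ := by
  -- at a minimizer of `∑ m²` no unit can move from `u` to `v` when `m v + 2 ≤ m u`
  obtain ⟨m, hm, hmin⟩ :=
    (InvImage.wf (fun m : α → ℤ => (∑ v, m v ^ 2).toNat) wellFounded_lt).has_min _
      (bdot_nonempty hq hq0)
  refine ⟨m, hm, fun s => Set.mem_Icc.2 ?_⟩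
  by_contra hout
  obtain ⟨u, v, huv, hmove⟩ :
      ∃ u v, m v + 2 ≤ m u ∧ m + Pi.single v 1 - Pi.single u 1 ∈ Bdot q := by
    rcases lt_or_ge γ (m s) with h | h
    · obtain ⟨t, ht, hmove⟩ := exists_add_single_sub_single_mem_bdot_of_gt hq hle hm h
      exact ⟨s, t, ht, hmove⟩
    · obtain ⟨u, hu, hmove⟩ :=
        exists_add_single_sub_single_mem_bdot_of_lt hq hq0 hr hmax hm (t := s) (by omega)
      exact ⟨u, s, hu, hmove⟩
  have hdec := sum_sq_add_single_sub_single_add_two_le huv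
  have hnonneg : 0 ≤ ∑ w, (m + Pi.single v 1 - Pi.single u 1 : α → ℤ) w ^ 2 :=
    sum_nonneg fun w _ => sq_nonneg _
  exact hmin _ hmove (by dsimp only [InvImage]; omega)

end Box

section TwoLevel

variable [DecidableEq α]

def twoLevel (γ : ℤ) (L : Finset α) (s : α) : ℤ :=
  if s ∈ L then γ else γ - 1

theorem twoLevel_mem_Icc (γ : ℤ) (L : Finset α) (s : α) :
    twoLevel γ L s ∈ Set.Icc (γ - 1) γ := by
  unfold twoLevel; split_ifs <;> simp

theorem sum_twoLevel (γ : ℤ) (L X : Finset α) :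
    ∑ s ∈ X, twoLevel γ L s = (γ - 1) * X.card + (L ∩ X).card := by
  have : ∀ s, twoLevel γ L s = (γ - 1) + if s ∈ L then 1 else 0 := fun s => by
    unfold twoLevel; split_ifs <;> ring
  simp only [this, sum_add_distrib, sum_const, nsmul_eq_mul, sum_boole, filter_mem_eq_inter,
    inter_comm X L]
  ring

variable [Fintype α] {q : Finset α → ℤ} {m : α → ℤ} {γ r : ℤ}

theorem twoLevel_mem_bdot_iff (hr : q univ - (γ - 1) * Fintype.card α = r) (L : Finset α) :
    twoLevel γ L ∈ Bdot q ↔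
      (L.card : ℤ) = r ∧ ∀ X, q X - (γ - 1) * X.card ≤ ((L ∩ X).card : ℤ) := by
  simp only [Bdot, Set.mem_ofPred_eq, sum_twoLevel, inter_univ, card_univ]
  exact ⟨fun h => ⟨by linarith [h.2], fun X => by linarith [h.1 X]⟩,
    fun h => ⟨fun X => by linarith [h.2 X], by linarith [h.1]⟩⟩

theorem eq_twoLevel_filter (hm : ∀ s, m s ∈ Set.Icc (γ - 1) γ) :
    m = twoLevel γ (univ.filter (m · = γ)) := by
  funext s
  obtain ⟨h₁, h₂⟩ := hm s
  by_cases hs : m s = γ <;> simp [twoLevel, hs]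
  omega

theorem exists_twoLevel_mem_bdot (hq : Supermodular q) (hq0 : q ∅ = 0)
    (hle : ∀ X, q X ≤ γ * X.card) (hr : q univ - (γ - 1) * Fintype.card α = r)
    (hmax : ∀ X, q X - (γ - 1) * X.card ≤ r) : ∃ L, twoLevel γ L ∈ Bdot q := by
  obtain ⟨m, hm, hbox⟩ := exists_mem_bdot_forall_mem_Icc hq hq0 hle hr hmax
  exact ⟨_, eq_twoLevel_filter hbox ▸ hm⟩

theorem lt_card_filter_eq (hr : q univ - (γ - 1) * Fintype.card α = r) (hm : m ∈ Bdot q)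
    (hle : ∀ s, m s ≤ γ) {t : α} (ht : m t < γ - 1) :
    r < (univ.filter (m · = γ)).card := by
  -- `m` lies below `twoLevel γ` of its `γ`-level set, strictly at `t`
  have hlt := sum_lt_sum (s := univ) (f := m) (g := twoLevel γ (univ.filter (m · = γ)))
    (fun s _ => by
      by_cases hs : m s = γ
      · simp [twoLevel, hs]
      · simp only [twoLevel, mem_filter, mem_univ, true_and, hs, if_false]
        have := hle s
        omega)
    ⟨t, mem_univ t, by
      simp only [twoLevel, mem_filter, mem_univ, true_and]
      split_ifs <;> omega⟩
  rw [sum_twoLevel, inter_univ, card_univ] at hlt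
  linarith [hm.2]

end TwoLevel

theorem List.eq_cons_of_mem_of_pairwise_ge {l : List ℤ} {γ : ℤ} (hl : l.Pairwise (· ≥ ·))
    (hle : ∀ x ∈ l, x ≤ γ) (hγ : γ ∈ l) : ∃ t, l = γ :: t := by
  obtain ⟨c, t, rfl⟩ := List.exists_cons_of_ne_nil (List.ne_nil_of_mem hγ)
  refine ⟨t, congrArg (· :: t) (le_antisymm (hle c List.mem_cons_self) ?_)⟩
  rcases List.mem_cons.1 hγ with h | h
  · exact h.le
  · exact List.rel_of_pairwise_cons hl h

theorem List.lex_of_forall_le_of_lt_mem {l₁ l₂ : List ℤ} {c y : ℤ} (h₂ : l₂.Pairwise (· ≥ ·))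
    (hl₁ : l₁ ≠ []) (h₁ : ∀ x ∈ l₁, x ≤ c) (hy : y ∈ l₂) (hcy : c < y) :
    List.Lex (· < ·) l₁ l₂ := by
  obtain ⟨a, l₁, rfl⟩ := List.exists_cons_of_ne_nil hl₁
  obtain ⟨b, l₂, rfl⟩ := List.exists_cons_of_ne_nil (List.ne_nil_of_mem hy)
  have hyb : y ≤ b := by
    rcases List.mem_cons.1 hy with rfl | hy
    · exact le_rfl
    · exact List.rel_of_pairwise_cons h₂ hy
  exact List.Lex.rel (by linarith [h₁ a List.mem_cons_self])

theorem List.lex_replicate_append {γ b : ℤ} (hb : b < γ) (l : List ℤ) :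
    ∀ {a : ℕ} {l₂ : List ℤ}, l₂.Pairwise (· ≥ ·) → (∀ x ∈ l₂, x ≤ γ) → a < l₂.count γ →
      List.Lex (· < ·) (List.replicate a γ ++ b :: l) l₂ := by
  intro a
  induction a with
  | zero =>
    intro l₂ hl₂ hle hcount
    obtain ⟨t, rfl⟩ := eq_cons_of_mem_of_pairwise_ge hl₂ hle (List.count_pos_iff.1 hcount)
    exact List.Lex.rel hb
  | succ a ih =>
    intro l₂ hl₂ hle hcount
    obtain ⟨t, rfl⟩ := eq_cons_of_mem_of_pairwise_ge hl₂ hle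
      (List.count_pos_iff.1 (by omega))
    rw [List.count_cons_self] at hcount
    exact List.Lex.cons
      (ih hl₂.of_cons (fun x hx => hle x (List.mem_cons_of_mem _ hx)) (by omega))

section SortedDesc

variable [Fintype α]

theorem coe_sortedDesc (m : α → ℤ) : (sortedDesc m : Multiset ℤ) = univ.val.map m := by
  rw [sortedDesc, Multiset.coe_reverse, Multiset.sort_eq]

theorem pairwise_sortedDesc (m : α → ℤ) : (sortedDesc m).Pairwise (· ≥ ·) := by
  rw [sortedDesc, List.pairwise_reverse]
  exact Multiset.pairwise_sort _ _

theorem mem_sortedDesc {m : α → ℤ} {x : ℤ} : x ∈ sortedDesc m ↔ ∃ s, m s = x := by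
  rw [← Multiset.mem_coe, coe_sortedDesc]
  simp

theorem count_sortedDesc (m : α → ℤ) (γ : ℤ) :
    (sortedDesc m).count γ = (univ.filter (m · = γ)).card := by
  rw [← Multiset.coe_count, coe_sortedDesc, Multiset.count_map, card_def, filter_val]
  simp only [eq_comm]

theorem sortedDesc_eq_of_decLE {x y : α → ℤ} (hxy : DecLE x y) (hyx : DecLE y x) :
    sortedDesc x = sortedDesc y := by
  rcases hxy with h | h
  · exact h
  rcases hyx with h' | h'
  · exact h'.symm
  · exact absurd h' (asymm h)

variable [DecidableEq α]

theorem sortedDesc_twoLevel (γ : ℤ) (L : Finset α) :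
    sortedDesc (twoLevel γ L)
      = List.replicate L.card γ ++ List.replicate (Fintype.card α - L.card) (γ - 1) := by
  refine List.Perm.eq_of_pairwise' (pairwise_sortedDesc _) ?_ (Multiset.coe_eq_coe.1 ?_)
  · simp only [List.pairwise_append, List.pairwise_replicate, List.mem_replicate]
    refine ⟨by simp, by simp, ?_⟩
    rintro _ ⟨-, rfl⟩ _ ⟨-, rfl⟩
    omega
  · rw [coe_sortedDesc, ← Multiset.coe_add, Multiset.coe_replicate, Multiset.coe_replicate,
      ← Multiset.filter_add_not (· ∈ L) univ.val, Multiset.map_add]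
    congr 1 <;> refine Multiset.eq_replicate.2 ⟨?_, by simp +contextual [twoLevel]⟩
    · simp [← filter_val]
    · simp [← filter_val, filter_not]

end SortedDesc

section DecMin

variable [Fintype α] [DecidableEq α] {q : Finset α → ℤ} {m₁ : α → ℤ} {γ r : ℤ}

theorem decMin_twoLevel (hr : q univ - (γ - 1) * Fintype.card α = r) {L : Finset α}
    (hL : twoLevel γ L ∈ Bdot q) : DecMin q (twoLevel γ L) := by
  refine ⟨hL, fun m hm => ?_⟩
  have hLcard := ((twoLevel_mem_bdot_iff hr L).1 hL).1
  by_cases hgt : ∃ s, γ < m s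
  · obtain ⟨s, hs⟩ := hgt
    have hms : m s ∈ sortedDesc m := mem_sortedDesc.2 ⟨s, rfl⟩
    have hne : sortedDesc (twoLevel γ L) ≠ [] := List.ne_nil_of_mem (mem_sortedDesc.2 ⟨s, rfl⟩)
    refine Or.inr (List.lex_of_forall_le_of_lt_mem (pairwise_sortedDesc m) hne
      (fun x hx => ?_) hms hs)
    obtain ⟨u, rfl⟩ := mem_sortedDesc.1 hx
    exact (twoLevel_mem_Icc γ L u).2
  push Not at hgt
  by_cases hlt : ∃ t, m t < γ - 1
  · obtain ⟨t, ht⟩ := hlt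
    have hF := lt_card_filter_eq hr hm hgt ht
    have hFcard := card_le_univ (univ.filter (m · = γ))
    obtain ⟨k, hk⟩ : ∃ k, Fintype.card α - L.card = k + 1 :=
      ⟨Fintype.card α - L.card - 1, by omega⟩
    rw [DecLE, sortedDesc_twoLevel, hk, List.replicate_succ]
    refine Or.inr (List.lex_replicate_append (by omega) _ (pairwise_sortedDesc m)
      (fun x hx => ?_) (by rw [count_sortedDesc]; omega))
    obtain ⟨u, rfl⟩ := mem_sortedDesc.1 hx
    exact hgt u
  push Not at hlt
  rw [eq_twoLevel_filter fun s => ⟨hlt s, hgt s⟩] at hm ⊢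
  have hcard := ((twoLevel_mem_bdot_iff hr _).1 hm).1
  left
  rw [sortedDesc_twoLevel, sortedDesc_twoLevel,
    show L.card = (univ.filter (m · = γ)).card by omega]

theorem DecMin.forall_mem_Icc (hq : Supermodular q) (hq0 : q ∅ = 0)
    (hle : ∀ X, q X ≤ γ * X.card) (hr : q univ - (γ - 1) * Fintype.card α = r)
    (hmax : ∀ X, q X - (γ - 1) * X.card ≤ r) (hm₁ : DecMin q m₁) :
    ∀ s, m₁ s ∈ Set.Icc (γ - 1) γ := by
  obtain ⟨L, hL⟩ := exists_twoLevel_mem_bdot hq hq0 hle hr hmax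
  have heq := sortedDesc_eq_of_decLE (hm₁.2 _ hL) ((decMin_twoLevel hr hL).2 _ hm₁.1)
  intro s
  obtain ⟨u, hu⟩ := mem_sortedDesc.1 (heq ▸ mem_sortedDesc.2 ⟨s, rfl⟩)
  exact hu ▸ twoLevel_mem_Icc γ L u

theorem twoLevel_mem_bdot_iff_exists_decMin (hq : Supermodular q) (hq0 : q ∅ = 0)
    (hle : ∀ X, q X ≤ γ * X.card) (hr : q univ - (γ - 1) * Fintype.card α = r)
    (hmax : ∀ X, q X - (γ - 1) * X.card ≤ r) (L : Finset α) :
    twoLevel γ L ∈ Bdot q ↔ ∃ m₁, DecMin q m₁ ∧ L = univ.filter (m₁ · = γ) := by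
  refine ⟨fun hL => ⟨_, decMin_twoLevel hr hL, ?_⟩, ?_⟩
  · ext s
    by_cases hs : s ∈ L <;> simp [twoLevel, hs]
  · rintro ⟨m₁, hm₁, rfl⟩
    exact eq_twoLevel_filter (hm₁.forall_mem_Icc hq hq0 hle hr hmax) ▸ hm₁.1

end DecMin

section Matroid

variable [Fintype α] [DecidableEq α] {q : Finset α → ℤ} {γ r : ℤ}

theorem exists_insert_erase_twoLevel_mem_bdot (hq : Supermodular q) {L₁ L₂ : Finset α}
    (h₁ : twoLevel γ L₁ ∈ Bdot q) (h₂ : twoLevel γ L₂ ∈ Bdot q) {s : α} (hs₁ : s ∈ L₁)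
    (hs₂ : s ∉ L₂) : ∃ t ∈ L₂, t ∉ L₁ ∧ twoLevel γ (insert t (L₁.erase s)) ∈ Bdot q := by
  obtain ⟨t, hlt, hmem⟩ :=
    exists_add_single_sub_single_mem_bdot hq h₁ h₂ (s := s) (by simp [twoLevel, hs₁, hs₂])
  have ht₁ : t ∉ L₁ := by
    intro h
    have := (twoLevel_mem_Icc γ L₂ t).2
    simp only [twoLevel, h, if_true] at hlt this
    omega
  have ht₂ : t ∈ L₂ := by
    by_contra h
    simp [twoLevel, h, ht₁] at hlt
  have hts : t ≠ s := by rintro rfl; exact ht₁ hs₁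
  refine ⟨t, ht₂, ht₁, ?_⟩
  convert hmem using 1
  funext v
  by_cases hvt : v = t
  · subst hvt
    simp [twoLevel, ht₁, hts]
  by_cases hvs : v = s
  · subst hvs
    simp [twoLevel, hs₁, hvt]
  · simp [twoLevel, hvt, hvs]

theorem exists_matroid_isBase_iff (hq : Supermodular q) (hq0 : q ∅ = 0)
    (hle : ∀ X, q X ≤ γ * X.card) (hr : q univ - (γ - 1) * Fintype.card α = r)
    (hmax : ∀ X, q X - (γ - 1) * X.card ≤ r) :
    ∃ M : Matroid α, M.E = Set.univ ∧
      ∀ B, M.IsBase B ↔ ∃ L : Finset α, ↑L = B ∧ twoLevel γ L ∈ Bdot q := by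
  refine ⟨Matroid.ofIsBaseOfFinite Set.finite_univ
    (fun B => ∃ L : Finset α, ↑L = B ∧ twoLevel γ L ∈ Bdot q) ?_ ?_
    (fun _ _ => Set.subset_univ _), rfl, fun _ => Iff.rfl⟩
  · obtain ⟨L, hL⟩ := exists_twoLevel_mem_bdot hq hq0 hle hr hmax
    exact ⟨L, L, rfl, hL⟩
  · rintro _ _ ⟨L₁, rfl, h₁⟩ ⟨L₂, rfl, h₂⟩ s ⟨hs₁, hs₂⟩
    obtain ⟨t, ht₂, ht₁, h⟩ := exists_insert_erase_twoLevel_mem_bdot hq h₁ h₂ hs₁ hs₂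
    exact ⟨t, ⟨ht₂, ht₁⟩, _, by push_cast [coe_insert, coe_erase]; rfl, h⟩

end Matroid

theorem stmt7_general [Fintype α] [DecidableEq α]
    (p : Finset α → ℤ) (hp : Supermodular p) (h0 : p ∅ = 0)
    (β₁ : ℤ)
    (hβ : IsLeast {b : ℤ | ∃ m ∈ Bdot p, ∀ s : α, m s ≤ b} β₁)
    (S₁ : Finset α)
    (hS₁ : ∀ s : α, s ∈ S₁ ↔ ∀ X : Finset α,
      (∀ Y : Finset α, p Y - (β₁ - 1) * Y.card ≤ p X - (β₁ - 1) * X.card) → s ∈ X) :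
    -- (i)
    (∀ L : Finset {a : α // a ∈ S₁},
      (L.card : ℤ) = p S₁ - (β₁ - 1) * S₁.card →
        ((∀ X : Finset {a : α // a ∈ S₁},
            p (X.map (Function.Embedding.subtype (· ∈ S₁))) - (β₁ - 1) * X.card
              ≤ ((L ∩ X).card : ℤ)) ↔
          (∃ m₁ : {a : α // a ∈ S₁} → ℤ,
            DecMin (fun X : Finset {a : α // a ∈ S₁} =>
              p (X.map (Function.Embedding.subtype (· ∈ S₁)))) m₁ ∧
            L = Finset.univ.filter (fun s => m₁ s = β₁)))) ∧
    -- (ii) nonemptiness of ℬ₁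
    (∃ L : Finset {a : α // a ∈ S₁},
      (L.card : ℤ) = p S₁ - (β₁ - 1) * S₁.card ∧
      ∀ X : Finset {a : α // a ∈ S₁},
        p (X.map (Function.Embedding.subtype (· ∈ S₁))) - (β₁ - 1) * X.card
          ≤ ((L ∩ X).card : ℤ)) ∧
    -- (ii) ℬ₁ is the base family of a matroid on S₁
    (∃ M : Matroid {a : α // a ∈ S₁}, M.E = Set.univ ∧
      ∀ B : Set {a : α // a ∈ S₁}, M.IsBase B ↔
        ∃ L : Finset {a : α // a ∈ S₁}, ↑L = B ∧
          (L.card : ℤ) = p S₁ - (β₁ - 1) * S₁.card ∧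
          ∀ X : Finset {a : α // a ∈ S₁},
            p (X.map (Function.Embedding.subtype (· ∈ S₁))) - (β₁ - 1) * X.card
              ≤ ((L ∩ X).card : ℤ)) := by
  have hpeak := (hp.sub_mul_card (β₁ - 1)).forall_le_of_mem_iff hS₁
  set e := Function.Embedding.subtype (· ∈ S₁)
  set q : Finset S₁ → ℤ := fun X => p (X.map e)
  have hq : Supermodular q := hp.map_embedding e
  have hq0 : q ∅ = 0 := by simpa [q] using h0
  have hr : q univ - (β₁ - 1) * Fintype.card S₁ = p S₁ - (β₁ - 1) * S₁.card := by
    simp [q, e, univ_eq_attach, attach_map_val]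
  have hmax : ∀ X, q X - (β₁ - 1) * X.card ≤ p S₁ - (β₁ - 1) * S₁.card := fun X => by
    simpa using hpeak (X.map e)
  have hle : ∀ X, q X ≤ β₁ * X.card := fun X => by
    obtain ⟨m, hm, hmβ⟩ := hβ.1
    simpa using le_mul_card_of_mem_bdot hm hmβ (X.map e)
  refine ⟨fun L hL => ?_, ?_, ?_⟩
  · rw [← twoLevel_mem_bdot_iff_exists_decMin hq hq0 hle hr hmax, twoLevel_mem_bdot_iff hr,
      and_iff_right hL]
  · obtain ⟨L, hL⟩ := exists_twoLevel_mem_bdot hq hq0 hle hr hmax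
    exact ⟨L, (twoLevel_mem_bdot_iff hr L).1 hL⟩
  · obtain ⟨M, hE, hB⟩ := exists_matroid_isBase_iff hq hq0 hle hr hmax
    exact ⟨M, hE, fun B => (hB B).trans (exists_congr fun L =>
      and_congr_right' (twoLevel_mem_bdot_iff hr L))⟩

/-- The matroid `M₁` on the peak set `S₁`: an `r₁`-element subset `L` of `S₁`
satisfies `|L ∩ X| ≥ p₁(X) − (β₁ − 1)|X|` for all `X ⊆ S₁` iff `L` is the set of
`β₁`-valued elements of some dec-min element of `Ḃ(p₁)`; this family is nonempty
and forms the family of bases of a matroid on `S₁`. -/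
theorem stmt7 [Fintype α] [DecidableEq α] [Nonempty α]
    (p : Finset α → ℤ) (hp : Supermodular p) (h0 : p ∅ = 0)
    (hne : (Bdot p).Nonempty) (β₁ : ℤ)
    (hβ : IsLeast {b : ℤ | ∃ m ∈ Bdot p, ∀ s : α, m s ≤ b} β₁)
    (S₁ : Finset α)
    (hS₁ : ∀ s : α, s ∈ S₁ ↔ ∀ X : Finset α,
      (∀ Y : Finset α, p Y - (β₁ - 1) * Y.card ≤ p X - (β₁ - 1) * X.card) → s ∈ X) :
    -- (i)
    (∀ L : Finset {a : α // a ∈ S₁},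
      (L.card : ℤ) = p S₁ - (β₁ - 1) * S₁.card →
        ((∀ X : Finset {a : α // a ∈ S₁},
            p (X.map (Function.Embedding.subtype (· ∈ S₁))) - (β₁ - 1) * X.card
              ≤ ((L ∩ X).card : ℤ)) ↔
          (∃ m₁ : {a : α // a ∈ S₁} → ℤ,
            DecMin (fun X : Finset {a : α // a ∈ S₁} =>
              p (X.map (Function.Embedding.subtype (· ∈ S₁)))) m₁ ∧
            L = Finset.univ.filter (fun s => m₁ s = β₁)))) ∧
    -- (ii) nonemptiness of ℬ₁
    (∃ L : Finset {a : α // a ∈ S₁},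
      (L.card : ℤ) = p S₁ - (β₁ - 1) * S₁.card ∧
      ∀ X : Finset {a : α // a ∈ S₁},
        p (X.map (Function.Embedding.subtype (· ∈ S₁))) - (β₁ - 1) * X.card
          ≤ ((L ∩ X).card : ℤ)) ∧
    -- (ii) ℬ₁ is the base family of a matroid on S₁
    (∃ M : Matroid {a : α // a ∈ S₁}, M.E = Set.univ ∧
      ∀ B : Set {a : α // a ∈ S₁}, M.IsBase B ↔
        ∃ L : Finset {a : α // a ∈ S₁}, ↑L = B ∧
          (L.card : ℤ) = p S₁ - (β₁ - 1) * S₁.card ∧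
          ∀ X : Finset {a : α // a ∈ S₁},
            p (X.map (Function.Embedding.subtype (· ∈ S₁))) - (β₁ - 1) * X.card
              ≤ ((L ∩ X).card : ℤ)) :=
  stmt7_general p hp h0 β₁ hβ S₁ hS₁
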